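/- Let L be a Poisson algebra over ℝ, I a Jordan ideal of L, and N = {g ∈ L : {g, f} ∈ I for all f ∈ I} its Lie normalizer. If N + I = L (the 'second class' case), then the quotient commutative ring L ⧸ I carries a Poisson bracket: there exists an antisymmetric ℝ-bilinear bracket on L ⧸ I satisfying the Jacobi identity and the Leibniz rule such that for all f, g ∈ N the bracket of the classes of f and g equals the class of {f, g}. -/

import Mathlib

/-!
Let `N` be the Lie normalizer of `I`. By antisymmetry `{I, N} ⊆ I`, so `{g, f} ≡ {g', f'} mod I`
whenever `g ≡ g'`, `f ≡ f'` and `g', f ∈ N`. When `N + I = L` every class has a representative in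
`N`, and the Dirac bracket of two classes is the class of the bracket of such representatives; by
the congruence it may be computed from any representatives whose first one lies in `N`. Since `N` is
closed under sums, real multiples and products, each Poisson identity on `L ⧸ I` is then the image
of the same identity in `L`.
-/

/-- A Poisson bracket on a commutative associative ℝ-algebra `L`:
an ℝ-bilinear antisymmetric bracket satisfying the Jacobi identity and the
Leibniz rule with respect to the (Jordan) product of `L`. -/
structure PoissonBracket (L : Type*) [CommRing L] [Algebra ℝ L] where
  bracket : L → L → L
  add_left : ∀ a b c : L, bracket (a + b) c = bracket a c + bracket b c
  smul_left : ∀ (r : ℝ) (a b : L), bracket (r • a) b = r • bracket a b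
  antisymm : ∀ a b : L, bracket a b = - bracket b a
  jacobi : ∀ a b c : L,
    bracket a (bracket b c) + bracket b (bracket c a) + bracket c (bracket a b) = 0
  leibniz : ∀ a b c : L, bracket (a * b) c = a * bracket b c + bracket a c * b

namespace PoissonBracket

variable {L : Type*} [CommRing L] [Algebra ℝ L] (P : PoissonBracket L)

theorem neg_left (a c : L) : P.bracket (-a) c = -P.bracket a c := by
  simpa using P.smul_left (-1) a c

theorem sub_left (a b c : L) : P.bracket (a - b) c = P.bracket a c - P.bracket b c := by
  rw [sub_eq_add_neg, P.add_left, P.neg_left, sub_eq_add_neg]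

theorem sub_right (a b c : L) : P.bracket a (b - c) = P.bracket a b - P.bracket a c := by
  rw [P.antisymm a (b - c), P.sub_left, P.antisymm b a, P.antisymm c a]
  ring

def normalizer (I : Ideal L) : Set L :=
  {g | ∀ f ∈ I, P.bracket g f ∈ I}

variable {P} {I : Ideal L}

theorem bracket_mem_of_mem_of_mem_normalizer {d f : L} (hd : d ∈ I)
    (hf : f ∈ P.normalizer I) : P.bracket d f ∈ I := by
  rw [P.antisymm]
  exact I.neg_mem (hf d hd)

theorem add_mem_normalizer {a b : L} (ha : a ∈ P.normalizer I) (hb : b ∈ P.normalizer I) :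
    a + b ∈ P.normalizer I := fun f hf => by
  rw [P.add_left]
  exact I.add_mem (ha f hf) (hb f hf)

theorem smul_mem_normalizer (r : ℝ) {a : L} (ha : a ∈ P.normalizer I) :
    r • a ∈ P.normalizer I := fun f hf => by
  rw [P.smul_left, ← algebraMap_smul L r]
  exact I.smul_mem _ (ha f hf)

theorem mul_mem_normalizer {a b : L} (ha : a ∈ P.normalizer I) (hb : b ∈ P.normalizer I) :
    a * b ∈ P.normalizer I := fun f hf => by
  rw [P.leibniz]
  exact I.add_mem (I.mul_mem_left a (hb f hf)) (I.mul_mem_right b (ha f hf))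

theorem mk_bracket_eq_of_mem_normalizer {g g' f f' : L} (hg' : g' ∈ P.normalizer I)
    (hf : f ∈ P.normalizer I) (hgg' : Ideal.Quotient.mk I g = Ideal.Quotient.mk I g')
    (hff' : Ideal.Quotient.mk I f = Ideal.Quotient.mk I f') :
    Ideal.Quotient.mk I (P.bracket g f) = Ideal.Quotient.mk I (P.bracket g' f') := by
  rw [Ideal.Quotient.mk_eq_mk_iff_sub_mem] at hgg' hff' ⊢
  have split : P.bracket g f - P.bracket g' f'
      = P.bracket (g - g') f + P.bracket g' (f - f') := by
    rw [P.sub_left, P.sub_right]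
    ring
  rw [split]
  exact I.add_mem (bracket_mem_of_mem_of_mem_normalizer hgg' hf) (hg' _ hff')

variable (P)

noncomputable def quotientBracket
    (hN : ∀ x : L ⧸ I, ∃ g ∈ P.normalizer I, Ideal.Quotient.mk I g = x) (x y : L ⧸ I) :
    L ⧸ I :=
  Ideal.Quotient.mk I (P.bracket (hN x).choose (hN y).choose)

variable (hN : ∀ x : L ⧸ I, ∃ g ∈ P.normalizer I, Ideal.Quotient.mk I g = x)

theorem quotientBracket_mk {f : L} (hf : f ∈ P.normalizer I) (g : L) :
    P.quotientBracket hN (Ideal.Quotient.mk I f) (Ideal.Quotient.mk I g) =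
      Ideal.Quotient.mk I (P.bracket f g) :=
  mk_bracket_eq_of_mem_normalizer hf (hN _).choose_spec.1 (hN _).choose_spec.2
    (hN _).choose_spec.2

theorem quotientBracket_add_left (x y z : L ⧸ I) :
    P.quotientBracket hN (x + y) z = P.quotientBracket hN x z + P.quotientBracket hN y z := by
  obtain ⟨a, ha, rfl⟩ := hN x
  obtain ⟨b, hb, rfl⟩ := hN y
  obtain ⟨c, rfl⟩ := Ideal.Quotient.mk_surjective z
  rw [← map_add, P.quotientBracket_mk hN (add_mem_normalizer ha hb), P.add_left, map_add,
    P.quotientBracket_mk hN ha, P.quotientBracket_mk hN hb]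

theorem quotientBracket_smul_left (r : ℝ) (x y : L ⧸ I) :
    P.quotientBracket hN (r • x) y = r • P.quotientBracket hN x y := by
  obtain ⟨a, ha, rfl⟩ := hN x
  obtain ⟨b, rfl⟩ := Ideal.Quotient.mk_surjective y
  have mk_smul (c : L) : Ideal.Quotient.mk I (r • c) = r • Ideal.Quotient.mk I c :=
    map_smul (Ideal.Quotient.mkₐ ℝ I) r c
  rw [← mk_smul, P.quotientBracket_mk hN (smul_mem_normalizer r ha), P.smul_left, mk_smul,
    P.quotientBracket_mk hN ha]

theorem quotientBracket_antisymm (x y : L ⧸ I) :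
    P.quotientBracket hN x y = -P.quotientBracket hN y x := by
  obtain ⟨a, ha, rfl⟩ := hN x
  obtain ⟨b, hb, rfl⟩ := hN y
  rw [P.quotientBracket_mk hN ha, P.quotientBracket_mk hN hb, P.antisymm, map_neg]

theorem quotientBracket_jacobi (x y z : L ⧸ I) :
    P.quotientBracket hN x (P.quotientBracket hN y z) +
      P.quotientBracket hN y (P.quotientBracket hN z x) +
        P.quotientBracket hN z (P.quotientBracket hN x y) = 0 := by
  obtain ⟨a, ha, rfl⟩ := hN x
  obtain ⟨b, hb, rfl⟩ := hN y
  obtain ⟨c, hc, rfl⟩ := hN z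
  rw [P.quotientBracket_mk hN hb c, P.quotientBracket_mk hN hc a, P.quotientBracket_mk hN ha b,
    P.quotientBracket_mk hN ha, P.quotientBracket_mk hN hb, P.quotientBracket_mk hN hc,
    ← map_add, ← map_add, P.jacobi, map_zero]

theorem quotientBracket_leibniz (x y z : L ⧸ I) :
    P.quotientBracket hN (x * y) z =
      x * P.quotientBracket hN y z + P.quotientBracket hN x z * y := by
  obtain ⟨a, ha, rfl⟩ := hN x
  obtain ⟨b, hb, rfl⟩ := hN y
  obtain ⟨c, rfl⟩ := Ideal.Quotient.mk_surjective z
  rw [← map_mul, P.quotientBracket_mk hN (mul_mem_normalizer ha hb), P.leibniz,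
    P.quotientBracket_mk hN hb, P.quotientBracket_mk hN ha, map_add, map_mul, map_mul]

end PoissonBracket

/-- End of Section 3.2: if `N + I = L` (second class constraints) then the
quotient commutative ring `L ⧸ I` carries a Poisson bracket (the Dirac
bracket), agreeing with the original bracket on classes of elements of `N`. -/
theorem stmt8 {L : Type*} [CommRing L] [Algebra ℝ L] (P : PoissonBracket L)
    (I : Ideal L)
    (hNI : ∀ x : L, ∃ g n : L,
      (∀ f ∈ I, P.bracket g f ∈ I) ∧ n ∈ I ∧ x = g + n) :
    ∃ br : (L ⧸ I) → (L ⧸ I) → (L ⧸ I),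
      (∀ x y z : L ⧸ I, br (x + y) z = br x z + br y z) ∧
      (∀ (r : ℝ) (x y : L ⧸ I), br (r • x) y = r • br x y) ∧
      (∀ x y : L ⧸ I, br x y = - br y x) ∧
      (∀ x y z : L ⧸ I, br x (br y z) + br y (br z x) + br z (br x y) = 0) ∧
      (∀ x y z : L ⧸ I, br (x * y) z = x * br y z + br x z * y) ∧
      (∀ f g : L, (∀ h ∈ I, P.bracket f h ∈ I) → (∀ h ∈ I, P.bracket g h ∈ I) →
        br (Ideal.Quotient.mk I f) (Ideal.Quotient.mk I g) =
          Ideal.Quotient.mk I (P.bracket f g)) := by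
  have hN : ∀ x : L ⧸ I, ∃ g ∈ P.normalizer I, Ideal.Quotient.mk I g = x := by
    intro x
    obtain ⟨a, rfl⟩ := Ideal.Quotient.mk_surjective x
    obtain ⟨g, n, hg, hn, rfl⟩ := hNI a
    exact ⟨g, hg, by rw [map_add, Ideal.Quotient.eq_zero_iff_mem.mpr hn, add_zero]⟩
  exact ⟨P.quotientBracket hN, P.quotientBracket_add_left hN, P.quotientBracket_smul_left hN,
    P.quotientBracket_antisymm hN, P.quotientBracket_jacobi hN, P.quotientBracket_leibniz hN,
    fun _ g hf _ => P.quotientBracket_mk hN hf g⟩
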